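/- arXiv:2403.15524 — 4 statements merged into one kernel-verified Lean document; each statement's English description precedes it below -/
import Mathlib

section
/- If all resources have equal payoffs (μ_k = μ for all k), then the PPA-Game admits a pure Nash equilibrium. -/
open Finset

/-- Total weight on resource `k` under profile `π`. -/
noncomputable def Wt {N K : ℕ} (w : Fin N → Fin K → ℝ) (π : Fin N → Fin K) (k : Fin K) : ℝ :=
  ∑ j : Fin N, if π j = k then w j k else 0

/-- Utility of player `j` in the PPA-Game. -/
noncomputable def U {N K : ℕ} (μ : Fin K → ℝ) (w : Fin N → Fin K → ℝ)
    (π : Fin N → Fin K) (j : Fin N) : ℝ :=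
  if 0 < Wt w π (π j) then μ (π j) * w j (π j) / Wt w π (π j) else 0

/-- Pure Nash equilibrium of the PPA-Game. -/
def IsPNE {N K : ℕ} (μ : Fin K → ℝ) (w : Fin N → Fin K → ℝ) (π : Fin N → Fin K) : Prop :=
  ∀ j : Fin N, ∀ k' : Fin K, U μ w (Function.update π j k') j ≤ U μ w π j

/-!
With equal payoffs a player's utility is proportional to her share `w j k / W k` of the total
weight `W k` on her resource. A move of player `j` from an occupied `a` to `b` is then strictly
profitable iff `w j a * (W b + w j b) < w j b * W a`, i.e. iff
`W a * W b < (W a - w j a) * (W b + w j b)`, and it never empties `a`. Hence every profitable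
move increases, lexicographically, the number of occupied resources and then the product of
their loads; a profile maximising this potential is a pure Nash equilibrium.
-/

open Function

lemma mul_add_lt_mul_of_share_lt {m x y A B : ℝ} (hm : 0 < m) (hx : 0 ≤ x) (hxA : x ≤ A)
    (h : (if 0 < A then m * x / A else 0) < (if 0 < B + y then m * y / (B + y) else 0)) :
    x * (B + y) < y * (if 0 < A then A else 1) := by
  have hBy : 0 < B + y := by
    by_contra hBy
    rw [if_neg hBy] at h
    split_ifs at h with hA
    · exact h.not_ge (by positivity)
    · exact h.false
  rw [if_pos hBy] at h
  split_ifs at h ⊢ with hA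
  · rwa [div_lt_div_iff₀ hA hBy, mul_assoc, mul_assoc, mul_lt_mul_iff_right₀ hm] at h
  · have hx0 : x = 0 := by linarith [not_lt.1 hA]
    subst hx0
    simpa using pos_of_mul_pos_right ((div_pos_iff_of_pos_right hBy).1 h) hm.le

lemma Finset.prod_lt_prod_of_eq_off_pair {ι R : Type*} [Fintype ι] [DecidableEq ι]
    [CommSemiring R] [PartialOrder R] [IsStrictOrderedRing R] {f g : ι → R} {a b : ι}
    (hab : a ≠ b) (hf : ∀ k, 0 < f k) (hfg : ∀ k, k ≠ a → k ≠ b → f k = g k)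
    (h : f a * f b < g a * g b) : ∏ k, f k < ∏ k, g k := by
  have hb : b ∈ univ.erase a := mem_erase.2 ⟨hab.symm, mem_univ b⟩
  rw [← mul_prod_erase _ _ (mem_univ a), ← mul_prod_erase _ _ hb, ← mul_assoc,
    ← mul_prod_erase _ g (mem_univ a), ← mul_prod_erase _ g hb, ← mul_assoc,
    ← prod_congr rfl fun k hk =>
      hfg k (ne_of_mem_erase (mem_of_mem_erase hk)) (ne_of_mem_erase hk)]
  exact mul_lt_mul_of_pos_right h (prod_pos fun k _ => hf k)

lemma exists_isPNE_of_potential {N K : ℕ} [Nonempty (Fin K)] {μ : Fin K → ℝ}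
    {w : Fin N → Fin K → ℝ} {α : Type*} [LinearOrder α] (φ : (Fin N → Fin K) → α)
    (hφ : ∀ π j b, U μ w π j < U μ w (update π j b) j → φ π < φ (update π j b)) :
    ∃ π, IsPNE μ w π := by
  obtain ⟨π, hπ⟩ := Finite.exists_max φ
  exact ⟨π, fun j b => not_lt.1 fun h => (hφ π j b h).not_ge (hπ _)⟩

section Loads

variable {N K : ℕ} {w : Fin N → Fin K → ℝ}

lemma Wt_nonneg (hw : ∀ j k, 0 ≤ w j k) (π : Fin N → Fin K) (k : Fin K) : 0 ≤ Wt w π k :=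
  sum_nonneg fun j _ => by split_ifs <;> simp [hw]

lemma le_Wt_self (hw : ∀ j k, 0 ≤ w j k) (π : Fin N → Fin K) (j : Fin N) :
    w j (π j) ≤ Wt w π (π j) := by
  simpa [Wt] using single_le_sum (f := fun i => if π i = π j then w i (π j) else 0)
    (fun i _ => by split_ifs <;> simp [hw]) (mem_univ j)

lemma Wt_update (π : Fin N → Fin K) (j : Fin N) (b k : Fin K) :
    Wt w (update π j b) k
      = Wt w π k - (if π j = k then w j k else 0) + (if b = k then w j k else 0) := by
  unfold Wt
  rw [← add_sum_erase _ _ (mem_univ j), ← add_sum_erase _ _ (mem_univ j),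
    sum_congr rfl fun i hi => by rw [update_of_ne (ne_of_mem_erase hi)], update_self]
  ring

variable {π : Fin N → Fin K} {j : Fin N} {b : Fin K}

lemma Wt_update_of_ne_of_ne {k : Fin K} (hka : k ≠ π j) (hkb : k ≠ b) :
    Wt w (update π j b) k = Wt w π k := by
  rw [Wt_update, if_neg hka.symm, if_neg hkb.symm]
  ring

lemma Wt_update_old (hb : b ≠ π j) :
    Wt w (update π j b) (π j) = Wt w π (π j) - w j (π j) := by
  rw [Wt_update, if_pos rfl, if_neg hb]
  ring

lemma Wt_update_new (hb : b ≠ π j) :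
    Wt w (update π j b) b = Wt w π b + w j b := by
  rw [Wt_update, if_neg hb.symm, if_pos rfl]
  ring

end Loads


section Potential

variable {N K : ℕ}

-- Empty resources contribute a factor `1`, so the product only sees the occupied ones.
noncomputable def loadFactor (w : Fin N → Fin K → ℝ) (π : Fin N → Fin K) (k : Fin K) : ℝ :=
  if 0 < Wt w π k then Wt w π k else 1

noncomputable def occupied (w : Fin N → Fin K → ℝ) (π : Fin N → Fin K) : Finset (Fin K) :=
  univ.filter fun k => 0 < Wt w π k

noncomputable def potential (w : Fin N → Fin K → ℝ) (π : Fin N → Fin K) : ℕ ×ₗ ℝ :=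
  toLex ((occupied w π).card, ∏ k, loadFactor w π k)

variable {μ : Fin K → ℝ} {w : Fin N → Fin K → ℝ} {π : Fin N → Fin K} {j : Fin N} {b : Fin K}

lemma loadFactor_pos (k : Fin K) : 0 < loadFactor w π k := by
  unfold loadFactor
  split_ifs with h
  exacts [h, one_pos]

lemma ne_of_U_lt_U_update (h : U μ w π j < U μ w (update π j b) j) : b ≠ π j := by
  rintro rfl
  simp at h

-- The cross-multiplied form of a profitable move; when `π j` is empty, `w j (π j) = 0` and it
-- just says `0 < w j b`.
lemma mul_add_lt_mul_loadFactor_of_U_lt (hμ : ∀ k, 0 < μ k) (heq : ∀ k k', μ k = μ k')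
    (hw : ∀ j k, 0 ≤ w j k) (h : U μ w π j < U μ w (update π j b) j) :
    w j (π j) * (Wt w π b + w j b) < w j b * loadFactor w π (π j) := by
  have hb := ne_of_U_lt_U_update h
  simp only [U, update_self, Wt_update_new hb, heq b (π j)] at h
  exact mul_add_lt_mul_of_share_lt (hμ _) (hw _ _) (le_Wt_self hw π j) h

lemma weight_pos_of_mul_add_lt (hw : ∀ j k, 0 ≤ w j k)
    (hkey : w j (π j) * (Wt w π b + w j b) < w j b * loadFactor w π (π j)) : 0 < w j b := by
  have := loadFactor_pos (w := w) (π := π) (π j)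
  nlinarith [mul_nonneg (hw j (π j)) (add_nonneg (Wt_nonneg hw π b) (hw j b))]

lemma sub_pos_of_mul_add_lt (hw : ∀ j k, 0 ≤ w j k)
    (hkey : w j (π j) * (Wt w π b + w j b) < w j b * loadFactor w π (π j))
    (hA : 0 < Wt w π (π j)) : 0 < Wt w π (π j) - w j (π j) := by
  rw [loadFactor, if_pos hA] at hkey
  nlinarith [Wt_nonneg hw π b, hw j (π j), hw j b]

lemma occupied_update_of_mul_add_lt (hw : ∀ j k, 0 ≤ w j k) (hb : b ≠ π j)
    (hkey : w j (π j) * (Wt w π b + w j b) < w j b * loadFactor w π (π j)) :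
    occupied w (update π j b) = insert b (occupied w π) := by
  ext k
  simp only [occupied, mem_filter, mem_univ, true_and, mem_insert]
  by_cases hkb : k = b
  · subst hkb
    simp only [Wt_update_new hb, true_or, iff_true]
    linarith [Wt_nonneg hw π k, weight_pos_of_mul_add_lt hw hkey]
  by_cases hka : k = π j
  · subst hka
    rw [Wt_update_old hb]
    exact ⟨fun h => Or.inr (by linarith [hw j (π j)]),
      fun h => sub_pos_of_mul_add_lt hw hkey (h.resolve_left hkb)⟩
  · rw [Wt_update_of_ne_of_ne hka hkb, or_iff_right hkb]

lemma loadFactor_mul_lt_of_mul_add_lt (hw : ∀ j k, 0 ≤ w j k) (hb : b ≠ π j)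
    (hkey : w j (π j) * (Wt w π b + w j b) < w j b * loadFactor w π (π j))
    (hB : 0 < Wt w π b) :
    loadFactor w π (π j) * loadFactor w π b
      < loadFactor w (update π j b) (π j) * loadFactor w (update π j b) b := by
  have hy := weight_pos_of_mul_add_lt hw hkey
  have hB' : 0 < Wt w π b + w j b := by linarith
  by_cases hA : 0 < Wt w π (π j)
  · have hA' := sub_pos_of_mul_add_lt hw hkey hA
    simp only [loadFactor, Wt_update_old hb, Wt_update_new hb, if_pos hA, if_pos hA', if_pos hB,
      if_pos hB'] at hkey ⊢
    nlinarith
  · have hA' : ¬0 < Wt w π (π j) - w j (π j) := by linarith [hw j (π j)]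
    simp only [loadFactor, Wt_update_old hb, Wt_update_new hb, if_neg hA, if_neg hA', if_pos hB,
      if_pos hB']
    linarith

lemma potential_lt_of_mul_add_lt (hw : ∀ j k, 0 ≤ w j k) (hb : b ≠ π j)
    (hkey : w j (π j) * (Wt w π b + w j b) < w j b * loadFactor w π (π j)) :
    potential w π < potential w (update π j b) := by
  rw [potential, potential, occupied_update_of_mul_add_lt hw hb hkey, Prod.Lex.lt_iff]
  by_cases hB : b ∈ occupied w π
  · refine Or.inr ⟨by simp [insert_eq_of_mem hB], ?_⟩
    refine prod_lt_prod_of_eq_off_pair hb.symm loadFactor_pos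
      (fun k hka hkb => by rw [loadFactor, loadFactor, Wt_update_of_ne_of_ne hka hkb]) ?_
    exact loadFactor_mul_lt_of_mul_add_lt hw hb hkey (by simpa [occupied] using hB)
  · exact Or.inl (by simp [card_insert_of_notMem hB])

end Potential

theorem stmt3_general {N K : ℕ} (hK : 2 ≤ K)
    (μ : Fin K → ℝ) (w : Fin N → Fin K → ℝ)
    (hμ : ∀ k, 0 < μ k ∧ μ k ≤ 1) (hw : ∀ j k, 0 ≤ w j k ∧ w j k ≤ 1)
    (heq : ∀ k k' : Fin K, μ k = μ k') :
    ∃ π : Fin N → Fin K, IsPNE μ w π := by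
  have : Nonempty (Fin K) := ⟨⟨0, by omega⟩⟩
  have hw₀ : ∀ j k, 0 ≤ w j k := fun j k => (hw j k).1
  refine exists_isPNE_of_potential (potential w) fun π j b h => ?_
  exact potential_lt_of_mul_add_lt hw₀ (ne_of_U_lt_U_update h)
    (mul_add_lt_mul_loadFactor_of_U_lt (fun k => (hμ k).1) heq hw₀ h)

/-- if all resources have the same payoff, a pure Nash equilibrium exists. -/
theorem stmt3 {N K : ℕ} (hN : 2 ≤ N) (hK : 2 ≤ K)
    (μ : Fin K → ℝ) (w : Fin N → Fin K → ℝ)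
    (hμ : ∀ k, 0 < μ k ∧ μ k ≤ 1) (hw : ∀ j k, 0 ≤ w j k ∧ w j k ≤ 1)
    (hpos : ∀ k : Fin K, ∃ j : Fin N, 0 < w j k)
    (heq : ∀ k k' : Fin K, μ k = μ k') :
    ∃ π : Fin N → Fin K, IsPNE μ w π :=
  stmt3_general hK μ w hμ hw heq
end

section
/- Suppose the resources' payoffs are long-tailed: for all k ≠ k', either μ_k/μ_{k'} > N_0/ε_0 or μ_{k'}/μ_k > N_0/ε_0, where N_0 = max_k |{j : w_{j,k} > 0}| and ε_0 = min of the positive weights w_{j,k}. Then the PPA-Game admits a pure Nash equilibrium. -/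
/-!
Let every player pick, among the resources on which it has positive weight, the one with the
largest payoff. Staying there earns at least `μ_k ε₀ / N₀`, since the player's weight is at least
`ε₀` and the total weight on `k` is at most `N₀`; deviating to `k'` earns at most `μ_{k'}`, and
nothing if the player has no weight on `k'`. As `μ_{k'} ≤ μ_k` and `N₀ / ε₀ ≥ 1`, the long-tail
condition forces `μ_k / μ_{k'} > N₀ / ε₀`, i.e. `μ_{k'} < μ_k ε₀ / N₀`.
-/

open Finset

section PPAGame

variable {N K : ℕ} {μ : Fin K → ℝ} {w : Fin N → Fin K → ℝ}

def MaximizesOnSupport (μ : Fin K → ℝ) (w : Fin N → Fin K → ℝ) (π : Fin N → Fin K) : Prop :=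
  ∀ j, (∃ k, 0 < w j k) → 0 < w j (π j) ∧ ∀ k, 0 < w j k → μ k ≤ μ (π j)

lemma le_Wt (hw : ∀ i k, 0 ≤ w i k) (σ : Fin N → Fin K) (j : Fin N) :
    w j (σ j) ≤ Wt w σ (σ j) := by
  have := single_le_sum (f := fun i => if σ i = σ j then w i (σ j) else 0)
    (fun i _ => by split_ifs <;> simp [hw]) (mem_univ j)
  simpa [Wt] using this

lemma Wt_le_card (σ : Fin N → Fin K) (k : Fin K) (hw : ∀ i, w i k ≤ 1) :
    Wt w σ k ≤ #{i | 0 < w i k} := by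
  calc Wt w σ k ≤ ∑ i, if 0 < w i k then (1 : ℝ) else 0 := by
        refine sum_le_sum fun i _ => ?_
        split_ifs <;> linarith [hw i]
    _ = #{i | 0 < w i k} := by simp [sum_boole]

lemma U_nonneg (hμ : ∀ k, 0 ≤ μ k) (hw : ∀ i k, 0 ≤ w i k) (σ : Fin N → Fin K) (j : Fin N) :
    0 ≤ U μ w σ j := by
  unfold U
  split_ifs with hW
  · exact div_nonneg (mul_nonneg (hμ _) (hw _ _)) hW.le
  · exact le_rfl

lemma U_le (hw : ∀ i k, 0 ≤ w i k) (σ : Fin N → Fin K) (j : Fin N) (hμ : 0 ≤ μ (σ j)) :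
    U μ w σ j ≤ μ (σ j) := by
  unfold U
  split_ifs with hW
  · rw [mul_div_assoc]
    exact mul_le_of_le_one_right hμ ((div_le_one hW).2 (le_Wt hw σ j))
  · exact hμ

lemma U_eq_zero_of_weight_eq_zero {σ : Fin N → Fin K} {j : Fin N} (h : w j (σ j) = 0) :
    U μ w σ j = 0 := by
  simp [U, h]

lemma mul_div_le_U (hw : ∀ i k, 0 ≤ w i k) {σ : Fin N → Fin K} {j : Fin N} {ε C : ℝ}
    (hμ : 0 ≤ μ (σ j)) (hε : 0 < ε) (hεw : ε ≤ w j (σ j)) (hC : Wt w σ (σ j) ≤ C) :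
    μ (σ j) * ε / C ≤ U μ w σ j := by
  have hW : 0 < Wt w σ (σ j) := hε.trans_le (hεw.trans (le_Wt hw σ j))
  rw [U, if_pos hW]
  exact div_le_div₀ (mul_nonneg hμ (hw _ _)) (mul_le_mul_of_nonneg_left hεw hμ) hW hC

lemma exists_maximizesOnSupport (hK : 0 < K) : ∃ π, MaximizesOnSupport μ w π := by
  have (j : Fin N) : ∃ k : Fin K, (∃ k, 0 < w j k) →
      0 < w j k ∧ ∀ k', 0 < w j k' → μ k' ≤ μ k := by
    by_cases h : ∃ k, 0 < w j k
    · obtain ⟨k0, hk0⟩ := h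
      obtain ⟨k, hk, hmax⟩ := exists_max_image {k | 0 < w j k} μ ⟨k0, by simpa using hk0⟩
      exact ⟨k, fun _ => ⟨by simpa using hk, fun k' hk' => hmax k' (by simpa using hk')⟩⟩
    · exact ⟨⟨0, hK⟩, fun h' => absurd h' h⟩
  choose π hπ using this
  exact ⟨π, hπ⟩

lemma lt_div_of_le_of_long_tailed {a b r : ℝ} (hb : 0 < b) (hba : b ≤ a) (hr : 1 ≤ r)
    (h : a / b > r ∨ b / a > r) : b < a / r := by
  have ha : 0 < a := hb.trans_le hba
  have hab : r < a / b := h.resolve_right fun h' => by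
    linarith [(div_le_one ha).2 hba]
  rw [lt_div_iff₀ (by linarith), mul_comm, ← lt_div_iff₀ hb]
  exact hab

theorem MaximizesOnSupport.isPNE (hμ : ∀ k, 0 < μ k)
    (hw : ∀ j k, 0 ≤ w j k ∧ w j k ≤ 1) {N0 : ℕ} (hN0 : ∀ k, #{j | 0 < w j k} ≤ N0)
    {ε0 : ℝ} (hε0pos : 0 < ε0) (hε0min : ∀ j k, 0 < w j k → ε0 ≤ w j k)
    (hlong : ∀ k k' : Fin K, k ≠ k' →
      μ k / μ k' > (N0 : ℝ) / ε0 ∨ μ k' / μ k > (N0 : ℝ) / ε0)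
    {π : Fin N → Fin K} (hπ : MaximizesOnSupport μ w π) :
    IsPNE μ w π := by
  have hwnn (j k) : 0 ≤ w j k := (hw j k).1
  have hμnn (k) : 0 ≤ μ k := (hμ k).le
  intro j k'
  by_cases hsupp : ∃ k, 0 < w j k
  swap
  · have hzero (k) : w j k = 0 := le_antisymm (not_lt.1 fun h => hsupp ⟨k, h⟩) (hwnn j k)
    rw [U_eq_zero_of_weight_eq_zero (hzero _), U_eq_zero_of_weight_eq_zero (hzero _)]
  obtain ⟨hwj, hmax⟩ := hπ j hsupp
  rcases eq_or_ne k' (π j) with rfl | hk'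
  · rw [Function.update_eq_self]
  have hσj : Function.update π j k' j = k' := Function.update_self j k' π
  rcases (hwnn j k').eq_or_lt with hw0 | hwk'
  · rw [U_eq_zero_of_weight_eq_zero (by rw [hσj, ← hw0])]
    exact U_nonneg hμnn hwnn π j
  have hcard : (#{i | 0 < w i (π j)} : ℝ) ≤ N0 := by exact_mod_cast hN0 (π j)
  have hWt : Wt w π (π j) ≤ N0 := (Wt_le_card π (π j) fun i => (hw i (π j)).2).trans hcard
  have hratio : 1 ≤ (N0 : ℝ) / ε0 := by
    rw [one_le_div hε0pos]
    exact (hε0min j _ hwj).trans ((le_Wt hwnn π j).trans hWt)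
  calc U μ w (Function.update π j k') j
      ≤ μ k' := (U_le hwnn _ j (hμnn _)).trans_eq (congrArg μ hσj)
    _ ≤ μ (π j) / (N0 / ε0) :=
        (lt_div_of_le_of_long_tailed (hμ k') (hmax k' hwk') hratio (hlong _ _ hk'.symm)).le
    _ = μ (π j) * ε0 / N0 := div_div_eq_mul_div _ _ _
    _ ≤ U μ w π j := mul_div_le_U hwnn (hμnn _) hε0pos (hε0min j _ hwj) hWt

end PPAGame

open scoped Classical in
theorem stmt6_general {N K : ℕ} (hK : 2 ≤ K)
    (μ : Fin K → ℝ) (w : Fin N → Fin K → ℝ)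
    (hμ : ∀ k, 0 < μ k ∧ μ k ≤ 1) (hw : ∀ j k, 0 ≤ w j k ∧ w j k ≤ 1)
    (N0 : ℕ) (hN0 : N0 = Finset.univ.sup fun k : Fin K =>
      (Finset.univ.filter fun j : Fin N => 0 < w j k).card)
    (ε0 : ℝ) (hε0pos : 0 < ε0)
    (hε0min : ∀ j k, 0 < w j k → ε0 ≤ w j k)
    (hlong : ∀ k k' : Fin K, k ≠ k' →
      μ k / μ k' > (N0 : ℝ) / ε0 ∨ μ k' / μ k > (N0 : ℝ) / ε0) :
    ∃ π : Fin N → Fin K, IsPNE μ w π := by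
  obtain ⟨π, hπ⟩ := exists_maximizesOnSupport (μ := μ) (w := w) (by omega)
  have hcard (k : Fin K) : #{j | 0 < w j k} ≤ N0 :=
    hN0 ▸ le_sup (f := fun k => #{j | 0 < w j k}) (mem_univ k)
  exact ⟨π, hπ.isPNE (fun k => (hμ k).1) hw hcard hε0pos hε0min hlong⟩

open scoped Classical in
/-- long-tailed payoffs guarantee the existence of a PNE. -/
theorem stmt6 {N K : ℕ} (hN : 2 ≤ N) (hK : 2 ≤ K)
    (μ : Fin K → ℝ) (w : Fin N → Fin K → ℝ)
    (hμ : ∀ k, 0 < μ k ∧ μ k ≤ 1) (hw : ∀ j k, 0 ≤ w j k ∧ w j k ≤ 1)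
    (hpos : ∀ k : Fin K, ∃ j : Fin N, 0 < w j k)
    (N0 : ℕ) (hN0 : N0 = Finset.univ.sup fun k : Fin K =>
      (Finset.univ.filter fun j : Fin N => 0 < w j k).card)
    (ε0 : ℝ) (hε0pos : 0 < ε0)
    (hε0min : ∀ j k, 0 < w j k → ε0 ≤ w j k)
    (hε0mem : ∃ j k, 0 < w j k ∧ w j k = ε0)
    (hlong : ∀ k k' : Fin K, k ≠ k' →
      μ k / μ k' > (N0 : ℝ) / ε0 ∨ μ k' / μ k > (N0 : ℝ) / ε0) :
    ∃ π : Fin N → Fin K, IsPNE μ w π :=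
  stmt6_general hK μ w hμ hw N0 hN0 ε0 hε0pos hε0min hlong
end

section
/- Suppose every strict pure Nash equilibrium of game G has deviation margin at least δ (every unilateral deviation from a PNE loses at least δ), and every non-PNE profile admits a deviation gaining at least δ. If G' is any game with |U'_j(π) − U_j(π)| < 3δ/8 for all players j and profiles π, then G and G' have exactly the same set of pure Nash equilibria. -/
/-- Pure Nash equilibrium of an abstract `N`-player game with strategy set `S`. -/
def IsPNEGame {N : ℕ} {S : Type*} (U : (Fin N → S) → Fin N → ℝ) (π : Fin N → S) : Prop :=
  ∀ (j : Fin N) (s : S), U (Function.update π j s) j ≤ U π j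

/-- if every PNE of `G` has deviation margin at least `δ`, every non-PNE
profile admits a deviation gaining at least `δ`, and `G'` is uniformly within `3δ/8` of
`G`, then `G` and `G'` have exactly the same pure Nash equilibria. -/
theorem stmt12 {N : ℕ} {S : Type*} [Fintype S]
    (U U' : (Fin N → S) → Fin N → ℝ) (δ : ℝ) (hδ : 0 < δ)
    (hNE : ∀ π : Fin N → S, IsPNEGame U π →
      ∀ (j : Fin N) (s : S), s ≠ π j → U (Function.update π j s) j ≤ U π j - δ)
    (hNoNE : ∀ π : Fin N → S, ¬ IsPNEGame U π →
      ∃ (j : Fin N) (s : S), U π j + δ ≤ U (Function.update π j s) j)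
    (hclose : ∀ (π : Fin N → S) (j : Fin N), |U' π j - U π j| < 3 * δ / 8) :
    ∀ π : Fin N → S, IsPNEGame U π ↔ IsPNEGame U' π := by
  intro π
  constructor
  · intro h j s
    by_cases hs : s = π j
    · subst hs
      rw [Function.update_eq_self]
    · have h1 := hNE π h j s hs
      have h2 := abs_lt.1 (hclose (Function.update π j s) j)
      have h3 := abs_lt.1 (hclose π j)
      linarith [h2.1, h2.2, h3.1, h3.2]
  · intro h'
    by_contra h
    obtain ⟨j, s, hjs⟩ := hNoNE π h
    have h2 := abs_lt.1 (hclose (Function.update π j s) j)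
    have h3 := abs_lt.1 (hclose π j)
    have := h' j s
    linarith [h2.1, h2.2, h3.1, h3.2]
end

section
/- In the homogeneous-resource PPA-Game (all μ_k equal), if π' = (k', π_{-j}) is an improvement step of π with player j deviating from k to k', then W_k(π')/W_k(π) > W_{k'}(π)/W_{k'}(π'), where W_k(π) is the total weight on resource k; the denominators W_k(π), W_{k'}(π') are positive. -/
/-! Moving `j` from `k` to `k'` lowers `W_k` by `w_{j,k}` and raises `W_{k'}` by `w_{j,k'}`, so
`W_k(π')/W_k(π) = 1 - w_{j,k}/W_k(π)` and `W_{k'}(π)/W_{k'}(π') = 1 - w_{j,k'}/W_{k'}(π')`.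
With a common payoff `μ`, the improvement step says exactly that `j`'s share on `k'` exceeds
its share on `k`. -/

open Finset

section Weights

variable {N K : ℕ} (w : Fin N → Fin K → ℝ)

theorem le_Wt_of_apply_eq (hw : ∀ i k, 0 ≤ w i k) {π : Fin N → Fin K} {j : Fin N} {k : Fin K}
    (hk : π j = k) : w j k ≤ Wt w π k := by
  have := Finset.single_le_sum (f := fun i : Fin N => if π i = k then w i k else 0)
    (fun i _ => ite_nonneg (hw i k) le_rfl) (Finset.mem_univ j)
  simpa [Wt, hk] using this

theorem Wt_update_add (π : Fin N → Fin K) (j : Fin N) (k' k : Fin K) :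
    Wt w (Function.update π j k') k + (if π j = k then w j k else 0) =
      Wt w π k + (if k' = k then w j k else 0) := by
  unfold Wt
  rw [Fintype.sum_eq_add_sum_compl j, Fintype.sum_eq_add_sum_compl j]
  have hrest : ∑ i ∈ {j}ᶜ, (if Function.update π j k' i = k then w i k else 0) =
      ∑ i ∈ {j}ᶜ, (if π i = k then w i k else 0) :=
    Finset.sum_congr rfl fun i hi => by
      rw [Function.update_of_ne (by simpa using hi)]
  rw [hrest, Function.update_self]
  ring

theorem Wt_update_of_apply_eq {π : Fin N → Fin K} {j : Fin N} {k k' : Fin K}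
    (hk : π j = k) (hkk' : k ≠ k') :
    Wt w (Function.update π j k') k = Wt w π k - w j k := by
  have := Wt_update_add w π j k' k
  simp only [hk, if_true, hkk'.symm, if_false] at this
  linarith

theorem Wt_update_self {π : Fin N → Fin K} {j : Fin N} {k' : Fin K} (hk' : π j ≠ k') :
    Wt w (Function.update π j k') k' = Wt w π k' + w j k' := by
  have := Wt_update_add w π j k' k'
  simpa [hk'] using this

theorem U_of_Wt_pos (μ : Fin K → ℝ) {π : Fin N → Fin K} {j : Fin N} {k : Fin K}
    (hk : π j = k) (hW : 0 < Wt w π k) : U μ w π j = μ k * w j k / Wt w π k := by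
  subst hk
  exact if_pos hW

end Weights

theorem stmt18_general {N K : ℕ}
    (μ : Fin K → ℝ) (w : Fin N → Fin K → ℝ)
    (hμ : ∀ k, 0 < μ k ∧ μ k ≤ 1) (hw : ∀ j k, 0 ≤ w j k ∧ w j k ≤ 1)
    (heq : ∀ k k' : Fin K, μ k = μ k')
    (π π' : Fin N → Fin K) (j : Fin N) (k k' : Fin K)
    (hk : π j = k) (hkk' : k ≠ k') (hdev : π' = Function.update π j k')
    (hwjk : 0 < w j k) (hwjk' : 0 < w j k')
    (himp : U μ w π' j > U μ w π j) :
    0 < Wt w π k ∧ 0 < Wt w π' k' ∧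
      Wt w π' k / Wt w π k > Wt w π k' / Wt w π' k' := by
  subst hdev
  have hw₀ : ∀ i k, 0 ≤ w i k := fun i k => (hw i k).1
  have hk' : Function.update π j k' j = k' := Function.update_self ..
  have hWk := hwjk.trans_le (le_Wt_of_apply_eq w hw₀ hk)
  have hWk' := hwjk'.trans_le (le_Wt_of_apply_eq w hw₀ hk')
  have hshare : w j k / Wt w π k < w j k' / Wt w (Function.update π j k') k' := by
    rw [U_of_Wt_pos w μ hk' hWk', U_of_Wt_pos w μ hk hWk, ← heq k k', mul_div_assoc,
      mul_div_assoc] at himp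
    exact (mul_lt_mul_iff_right₀ (hμ k).1).mp himp
  have hWk'_old : Wt w π k' = Wt w (Function.update π j k') k' - w j k' := by
    rw [Wt_update_self w (hk ▸ hkk')]
    ring
  refine ⟨hWk, hWk', ?_⟩
  rw [Wt_update_of_apply_eq w hk hkk', hWk'_old, sub_div, sub_div, div_self hWk.ne',
    div_self hWk'.ne']
  linarith

/-- homogeneous resources (all payoffs equal): a valid improvement step of
player `j` from `k` to `k'` satisfies `W_k(π')/W_k(π) > W_{k'}(π)/W_{k'}(π')`, the
denominators being positive. -/
theorem stmt18 {N K : ℕ} (hN : 2 ≤ N) (hK : 2 ≤ K)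
    (μ : Fin K → ℝ) (w : Fin N → Fin K → ℝ)
    (hμ : ∀ k, 0 < μ k ∧ μ k ≤ 1) (hw : ∀ j k, 0 ≤ w j k ∧ w j k ≤ 1)
    (heq : ∀ k k' : Fin K, μ k = μ k')
    (π π' : Fin N → Fin K) (j : Fin N) (k k' : Fin K)
    (hk : π j = k) (hkk' : k ≠ k') (hdev : π' = Function.update π j k')
    (hwjk : 0 < w j k) (hwjk' : 0 < w j k')
    (himp : U μ w π' j > U μ w π j) :
    0 < Wt w π k ∧ 0 < Wt w π' k' ∧
      Wt w π' k / Wt w π k > Wt w π k' / Wt w π' k' :=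
  stmt18_general μ w hμ hw heq π π' j k k' hk hkk' hdev hwjk hwjk' himp
end
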